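/- arXiv:1701.02819 — 2 statements merged into one kernel-verified Lean document; each statement's English description precedes it below -/
import Mathlib

section
/- Let V = {1,…,n} be a finite set and 𝓗 a finite Tetris hypergraph on V. If Γ_i is an SG decreasing impartial game for each i ∈ V, then the 𝓗-combination Γ_𝓗 is SG decreasing, i.e., every move in Γ_𝓗 strictly decreases the Sprague–Grundy value. -/
/-- The minimum excludant of a set of natural numbers. -/
noncomputable def mex (S : Set ℕ) : ℕ := sInf {n : ℕ | n ∉ S}

open Classical in
/-- The Sprague–Grundy function of the impartial game with move relation `move`
(meaningful when every play is finite, i.e. the reversed move relation is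
well-founded): it satisfies `sgFun move x = mex {sgFun move y | move x y}`. -/
noncomputable def sgFun {X : Type*} (move : X → X → Prop) : X → ℕ :=
  if hwf : WellFounded (fun y x => move x y) then
    hwf.fix (fun x ih => mex {v : ℕ | ∃ (y : X) (h : move x y), ih y h = v})
  else fun _ => 0

open Classical in
/-- The Tetris function: the length of a longest play starting at `x`
(meaningful when every play is finite and the game is finitely branching):
it satisfies `tetrisFun move x = sup {tetrisFun move y + 1 | move x y}`. -/
noncomputable def tetrisFun {X : Type*} (move : X → X → Prop) : X → ℕ :=
  if hwf : WellFounded (fun y x => move x y) then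
    hwf.fix (fun x ih => sSup {v : ℕ | ∃ (y : X) (h : move x y), v = ih y h + 1})
  else fun _ => 0

/-- A game is SG decreasing if every move strictly decreases the SG value. -/
def SGDecreasing {X : Type*} (move : X → X → Prop) : Prop :=
  ∀ x y, move x y → sgFun move y < sgFun move x

/-- The move relation of the game `NIM_𝓗` on positions `ℕ^V`. -/
def nimMove {V : Type*} (𝓗 : Set (Finset V)) (x x' : V → ℕ) : Prop :=
  ∃ H ∈ 𝓗, (∀ i ∈ H, x' i < x i) ∧ ∀ i ∉ H, x' i = x i

/-- A hypergraph is Tetris if `NIM_𝓗` is SG decreasing. -/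
def IsTetrisHypergraph {V : Type*} (𝓗 : Set (Finset V)) : Prop :=
  SGDecreasing (nimMove 𝓗)

/-- The move relation of the `𝓗`-combination of the games `move i`. -/
def combMove {V : Type*} {X : V → Type*} (𝓗 : Set (Finset V))
    (move : ∀ i, X i → X i → Prop) (x x' : ∀ i, X i) : Prop :=
  ∃ H ∈ 𝓗, (∀ i ∈ H, move i (x i) (x' i)) ∧ ∀ i ∉ H, x' i = x i

/-- Condition (*): every nonempty induced subhypergraph has a hyperedge
intersecting all its hyperedges. -/
def CondStar {V : Type*} [DecidableEq V] (𝓗 : Set (Finset V)) : Prop :=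
  ∀ S : Finset V, (∃ H ∈ 𝓗, H ⊆ S) →
    ∃ H ∈ 𝓗, H ⊆ S ∧ ∀ H' ∈ 𝓗, H' ⊆ S → (H ∩ H').Nonempty

lemma mem_of_lt_mex {S : Set ℕ} {v : ℕ} (h : v < mex S) : v ∈ S := by
  by_contra hv
  exact absurd (Nat.sInf_le hv) (not_le.mpr h)

lemma sgFun_eq {X : Type*} {move : X → X → Prop}
    (hwf : WellFounded (fun y x => move x y)) (x : X) :
    sgFun move x = mex {v : ℕ | ∃ y, move x y ∧ sgFun move y = v} := by
  have hfun : sgFun move = hwf.fix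
      (fun x ih => mex {v : ℕ | ∃ (y : X) (h : move x y), ih y h = v}) := by
    simp only [sgFun, dif_pos hwf]
  conv_lhs => rw [hfun, hwf.fix_eq]
  congr 1
  ext v
  constructor
  · rintro ⟨y, h, rfl⟩; exact ⟨y, h, by rw [hfun]⟩
  · rintro ⟨y, h, rfl⟩; exact ⟨y, h, by rw [hfun]⟩

/-- In an SG decreasing game, every value below the SG value is attained by a move. -/
lemma exists_move_sg {X : Type*} {move : X → X → Prop}
    (hwf : WellFounded (fun y x => move x y)) {x : X} {v : ℕ}
    (h : v < sgFun move x) : ∃ y, move x y ∧ sgFun move y = v := by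
  rw [sgFun_eq hwf x] at h
  exact mem_of_lt_mex h

lemma nimMove_wf {V : Type*} [Fintype V] (𝓗 : Set (Finset V))
    (hne : ∀ H ∈ 𝓗, H.Nonempty) :
    WellFounded (fun y x => nimMove 𝓗 x y) := by
  have : Subrelation (fun y x => nimMove 𝓗 x y)
      (InvImage (· < ·) (fun x : V → ℕ => ∑ i, x i)) := by
    rintro y x ⟨H, hH, hlt, heq⟩
    refine Finset.sum_lt_sum (fun i _ => ?_) ?_
    · by_cases hi : i ∈ H
      · exact (hlt i hi).le
      · exact (heq i hi).le
    · obtain ⟨i, hi⟩ := hne H hH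
      exact ⟨i, Finset.mem_univ i, hlt i hi⟩
  exact this.wf (InvImage.wf _ Nat.lt_wfRel.wf)

theorem stmt2 {V : Type*} [Fintype V] {X : V → Type*}
    (𝓗 : Set (Finset V)) (hne : ∀ H ∈ 𝓗, H.Nonempty)
    (hT : IsTetrisHypergraph 𝓗)
    (move : ∀ i, X i → X i → Prop)
    (hwf : ∀ i, WellFounded (fun y x => move i x y))
    (hfin : ∀ i x, {y | move i x y}.Finite)
    (hdec : ∀ i, SGDecreasing (move i)) :
    SGDecreasing (combMove 𝓗 move) := by
  classical
  set φ : (∀ i, X i) → (V → ℕ) := fun x i => sgFun (move i) (x i) with hφ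
  have hwfnim : WellFounded (fun y x => nimMove 𝓗 x y) := nimMove_wf 𝓗 hne
  -- every combination move projects to a NIM move
  have hproj : ∀ x y, combMove 𝓗 move x y → nimMove 𝓗 (φ x) (φ y) := by
    rintro x y ⟨H, hH, hmv, heq⟩
    exact ⟨H, hH, fun i hi => hdec i _ _ (hmv i hi), fun i hi => by
      simp only [hφ]; rw [heq i hi]⟩
  -- the combination move is well-founded
  have hwfc : WellFounded (fun y x => combMove 𝓗 move x y) := by
    have : Subrelation (fun y x => combMove 𝓗 move x y)
        (InvImage (· < ·) (fun x => sgFun (nimMove 𝓗) (φ x))) := by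
      intro y x h
      exact hT _ _ (hproj x y h)
    exact this.wf (InvImage.wf _ Nat.lt_wfRel.wf)
  -- key: the SG value of the combination is the NIM SG value of the projection
  have key : ∀ x, sgFun (combMove 𝓗 move) x = sgFun (nimMove 𝓗) (φ x) := by
    intro x
    induction x using hwfc.induction with
    | _ x ih =>
      rw [sgFun_eq hwfc x, sgFun_eq hwfnim (φ x)]
      congr 1
      ext v
      constructor
      · rintro ⟨y, hy, rfl⟩
        exact ⟨φ y, hproj x y hy, (ih y hy).symm⟩
      · rintro ⟨z, ⟨H, hH, hlt, heq⟩, rfl⟩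
        -- lift the NIM move to a combination move
        have hch : ∀ i ∈ H, ∃ y', move i (x i) y' ∧ sgFun (move i) y' = z i :=
          fun i hi => exists_move_sg (hwf i) (hlt i hi)
        choose f hf hfsg using hch
        refine ⟨fun i => if hi : i ∈ H then f i hi else x i, ⟨H, hH,
          fun i hi => by simp only [dif_pos hi]; exact hf i hi,
          fun i hi => by simp only [dif_neg hi]⟩, ?_⟩
        have hφy : φ (fun i => if hi : i ∈ H then f i hi else x i) = z := by
          funext i
          by_cases hi : i ∈ H
          · simp only [hφ, dif_pos hi]; exact hfsg i hi
          · simp only [hφ, dif_neg hi]; exact (heq i hi).symm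
        rw [ih _ ⟨H, hH, fun i hi => by simp only [dif_pos hi]; exact hf i hi,
          fun i hi => by simp only [dif_neg hi]⟩, hφy]
  intro x y h
  rw [key x, key y]
  exact hT _ _ (hproj x y h)
end

section
/- Let 𝓗 be a finite hypergraph on a finite set V, let w ∉ V, and let 𝓗* = {H ∪ {w} : H ∈ 𝓗}, a hypergraph on V ∪ {w}. Define the position x ∈ ℕ^{V∪{w}} by x_i = 1 for i ∈ V and x_w = |𝓗|. Then 𝓗* is an intersecting hypergraph (any two of its hyperedges intersect) and 𝓣_{𝓗*}(x) = μ(𝓗), the matching number of 𝓗. -/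
/-- The matching number of a hypergraph: the maximum number of pairwise
disjoint hyperedges. -/
noncomputable def matchingNumber {V : Type*} (𝓗 : Set (Finset V)) : ℕ :=
  sSup {k : ℕ | ∃ M : Finset (Finset V), (↑M : Set (Finset V)) ⊆ 𝓗 ∧
    (↑M : Set (Finset V)).Pairwise (fun H H' => Disjoint H H') ∧ M.card = k}

/-!
Every hyperedge of `𝓗*` contains the apex `w`, so `𝓗*` is intersecting and every move lowers
the heap at `w`; in particular every play is finite. From the given position, a move along
`H ∪ {w}` needs all heaps of `H` to be still full (of size one) and empties them, so the
hyperedges played along a play are pairwise disjoint: they form a matching of `𝓗`, and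
`𝓣(x) ≤ μ(𝓗)` follows by induction, with the matching number of the still playable hyperedges as
the bound. Conversely, the hyperedges of a maximum matching can be played one after the other,
since the apex heap has size `|𝓗| ≥ μ(𝓗)`.
-/

section Tetris

variable {X : Type*} {move : X → X → Prop}

theorem tetrisFun_eq_sSup (hwf : WellFounded (fun y x => move x y)) (x : X) :
    tetrisFun move x = sSup {v : ℕ | ∃ (y : X) (_ : move x y), v = tetrisFun move y + 1} := by
  have hfix : tetrisFun move = hwf.fix
      (fun x ih => sSup {v : ℕ | ∃ (y : X) (h : move x y), v = ih y h + 1}) := by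
    rw [tetrisFun, dif_pos hwf]
  conv_lhs => rw [hfix, hwf.fix_eq]
  rw [hfix]

theorem tetrisFun_le_of_forall_move (hwf : WellFounded (fun y x => move x y))
    (P : X → Prop) (g : X → ℕ) (hstep : ∀ x y, P x → move x y → P y ∧ g y < g x)
    {x : X} (hx : P x) : tetrisFun move x ≤ g x := by
  induction x using hwf.induction with
  | _ x ih =>
    rw [tetrisFun_eq_sSup hwf]
    refine csSup_le' ?_
    rintro v ⟨y, hxy, rfl⟩
    obtain ⟨hy, hgy⟩ := hstep x y hx hxy
    have := ih y hxy hy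
    omega

theorem wellFounded_of_forall_move_lt (f : X → ℕ) (hf : ∀ x y, move x y → f y < f x) :
    WellFounded (fun y x => move x y) :=
  Subrelation.wf (fun {y x} h => hf x y h) (InvImage.wf f wellFounded_lt)

theorem tetrisFun_le_of_forall_move_lt (f : X → ℕ) (hf : ∀ x y, move x y → f y < f x)
    (x : X) : tetrisFun move x ≤ f x :=
  tetrisFun_le_of_forall_move (wellFounded_of_forall_move_lt f hf) (fun _ => True) f
    (fun x y _ h => ⟨trivial, hf x y h⟩) trivial

theorem tetrisFun_add_one_le_of_move (f : X → ℕ) (hf : ∀ x y, move x y → f y < f x)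
    {x y : X} (h : move x y) : tetrisFun move y + 1 ≤ tetrisFun move x := by
  rw [tetrisFun_eq_sSup (wellFounded_of_forall_move_lt f hf) x]
  refine le_csSup ⟨f x, ?_⟩ ⟨y, h, rfl⟩
  rintro v ⟨z, hxz, rfl⟩
  have := tetrisFun_le_of_forall_move_lt f hf z
  have := hf x z hxz
  omega

end Tetris

section Matching

variable {V : Type*} {S T : Set (Finset V)}

def matchingSizes (S : Set (Finset V)) : Set ℕ :=
  {k : ℕ | ∃ M : Finset (Finset V), (↑M : Set (Finset V)) ⊆ S ∧
    (↑M : Set (Finset V)).Pairwise (fun H H' => Disjoint H H') ∧ M.card = k}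

theorem matchingSizes_bddAbove (hS : S.Finite) : BddAbove (matchingSizes S) := by
  refine ⟨S.ncard, ?_⟩
  rintro k ⟨N, hNS, -, rfl⟩
  rw [← Set.ncard_coe_finset]
  exact Set.ncard_le_ncard hNS hS

theorem card_le_matchingNumber (hS : S.Finite) {M : Finset (Finset V)} (hMS : ↑M ⊆ S)
    (hM : (↑M : Set (Finset V)).Pairwise (fun H H' => Disjoint H H')) :
    M.card ≤ matchingNumber S :=
  le_csSup (matchingSizes_bddAbove hS) ⟨M, hMS, hM, rfl⟩

theorem exists_card_eq_matchingNumber (hS : S.Finite) :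
    ∃ M : Finset (Finset V), ↑M ⊆ S ∧
      (↑M : Set (Finset V)).Pairwise (fun H H' => Disjoint H H') ∧
      M.card = matchingNumber S :=
  Nat.sSup_mem (s := matchingSizes S) ⟨0, ∅, by simp, by simp, rfl⟩ (matchingSizes_bddAbove hS)

theorem matchingNumber_le_ncard (hS : S.Finite) : matchingNumber S ≤ S.ncard := by
  obtain ⟨M, hMS, -, hM⟩ := exists_card_eq_matchingNumber hS
  rw [← hM, ← Set.ncard_coe_finset]
  exact Set.ncard_le_ncard hMS hS

theorem matchingNumber_add_one_le (hT : T.Finite) (hST : S ⊆ T) {H : Finset V} (hHT : H ∈ T)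
    (hH : H.Nonempty) (hdisj : ∀ H' ∈ S, Disjoint H H') :
    matchingNumber S + 1 ≤ matchingNumber T := by
  classical
  obtain ⟨M, hMS, hM, hcard⟩ := exists_card_eq_matchingNumber (hT.subset hST)
  have hHM : H ∉ M := fun hHM => hH.ne_empty (disjoint_self.mp (hdisj H (hMS hHM)))
  rw [← hcard, ← Finset.card_insert_of_notMem hHM]
  refine card_le_matchingNumber hT ?_ ?_
  · rw [Finset.coe_insert]
    exact Set.insert_subset hHT (hMS.trans hST)
  · rw [Finset.coe_insert]
    exact hM.insert fun H' hH' _ => ⟨hdisj H' (hMS hH'), (hdisj H' (hMS hH')).symm⟩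

end Matching

section ApexCone

variable {V : Type*} [DecidableEq V]

/-- The hypergraph `𝓗*` on `V ∪ {w}`, with the new vertex `w` encoded as `none`. -/
def apexCone (𝓗 : Set (Finset V)) : Set (Finset (Option V)) :=
  {E : Finset (Option V) | ∃ H ∈ 𝓗, E = insert none (H.image some)}

theorem apexCone_intersecting (𝓗 : Set (Finset V)) :
    ∀ E ∈ apexCone 𝓗, ∀ E' ∈ apexCone 𝓗, (E ∩ E').Nonempty := by
  rintro _ ⟨H, -, rfl⟩ _ ⟨H', -, rfl⟩
  exact ⟨none, by simp⟩

theorem nimMove_apexCone_iff {𝓗 : Set (Finset V)} {x y : Option V → ℕ} :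
    nimMove (apexCone 𝓗) x y ↔ ∃ H ∈ 𝓗, y none < x none ∧
      (∀ i ∈ H, y (some i) < x (some i)) ∧ ∀ i ∉ H, y (some i) = x (some i) := by
  constructor
  · rintro ⟨_, ⟨H, hH, rfl⟩, hlt, heq⟩
    exact ⟨H, hH, hlt none (by simp), fun i hi => hlt _ (by simp [hi]),
      fun i hi => heq _ (by simp [hi])⟩
  · rintro ⟨H, hH, hnone, hlt, heq⟩
    refine ⟨_, ⟨H, hH, rfl⟩, ?_, ?_⟩
    · rintro (_ | i) hi
      · exact hnone
      · exact hlt i (by simpa using hi)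
    · rintro (_ | i) hi
      · simp at hi
      · exact heq i (by simpa using hi)

theorem apex_lt_of_nimMove_apexCone {𝓗 : Set (Finset V)} {x y : Option V → ℕ}
    (h : nimMove (apexCone 𝓗) x y) : y none < x none := by
  obtain ⟨H, -, hnone, -⟩ := nimMove_apexCone_iff.mp h
  exact hnone

/-- At a position with heaps of size at most one on `V`, the hyperedges of `𝓗` that can still
be played. -/
def liveEdges (𝓗 : Set (Finset V)) (x : Option V → ℕ) : Set (Finset V) :=
  {H | H ∈ 𝓗 ∧ ∀ i ∈ H, x (some i) = 1}

theorem tetrisFun_apexCone_le_matchingNumber {𝓗 : Set (Finset V)} (h𝓗 : 𝓗.Finite)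
    (hne : ∀ H ∈ 𝓗, H.Nonempty) {x : Option V → ℕ} (hx : ∀ i, x (some i) ≤ 1) :
    tetrisFun (nimMove (apexCone 𝓗)) x ≤ matchingNumber (liveEdges 𝓗 x) := by
  refine tetrisFun_le_of_forall_move
    (wellFounded_of_forall_move_lt (fun x => x none) fun _ _ => apex_lt_of_nimMove_apexCone)
    (fun x => ∀ i, x (some i) ≤ 1) (fun x => matchingNumber (liveEdges 𝓗 x))
    (fun x y hx hxy => ?_) hx
  obtain ⟨H, hH, -, hlt, heq⟩ := nimMove_apexCone_iff.mp hxy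
  have hyH : ∀ i ∈ H, y (some i) = 0 := fun i hi => by
    have := hlt i hi; have := hx i; omega
  have hxH : ∀ i ∈ H, x (some i) = 1 := fun i hi => by
    have := hlt i hi; have := hx i; omega
  have hy : ∀ i, y (some i) ≤ 1 := fun i => by
    by_cases hi : i ∈ H
    · simp [hyH i hi]
    · rw [heq i hi]; exact hx i
  refine ⟨hy, matchingNumber_add_one_le (h𝓗.subset fun _ h => h.1) ?_ ⟨hH, hxH⟩ (hne H hH) ?_⟩
  · rintro H' ⟨hH', hyH'⟩
    refine ⟨hH', fun i hi => ?_⟩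
    by_cases hiH : i ∈ H
    · have := hyH i hiH; have := hyH' i hi; omega
    · rw [← heq i hiH]; exact hyH' i hi
  · rintro H' ⟨-, hyH'⟩
    refine Finset.disjoint_left.mpr fun i hiH hiH' => ?_
    have := hyH i hiH; have := hyH' i hiH'; omega

theorem exists_nimMove_apexCone_of_mem_liveEdges {𝓗 : Set (Finset V)} {x : Option V → ℕ}
    {H : Finset V} (hH : H ∈ liveEdges 𝓗 x) (hx : 0 < x none) :
    ∃ y, nimMove (apexCone 𝓗) x y ∧ y none = x none - 1 ∧
      ∀ H' ∈ liveEdges 𝓗 x, Disjoint H H' → H' ∈ liveEdges 𝓗 y := by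
  let y : Option V → ℕ := fun j => j.elim (x none - 1) fun i => if i ∈ H then 0 else x (some i)
  refine ⟨y, nimMove_apexCone_iff.mpr ⟨H, hH.1, ?_, fun i hi => ?_, fun i hi => ?_⟩, rfl, ?_⟩
  · simp only [y, Option.elim]; omega
  · simp only [y, Option.elim, if_pos hi, hH.2 i hi, zero_lt_one]
  · simp only [y, Option.elim, if_neg hi]
  · rintro H' ⟨hH', hxH'⟩ hdisj
    refine ⟨hH', fun i hi => ?_⟩
    simp only [y, Option.elim, if_neg (Finset.disjoint_right.mp hdisj hi), hxH' i hi]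

theorem card_le_tetrisFun_apexCone {𝓗 : Set (Finset V)} (M : Finset (Finset V))
    {x : Option V → ℕ} (hMx : ↑M ⊆ liveEdges 𝓗 x)
    (hM : (↑M : Set (Finset V)).Pairwise (fun H H' => Disjoint H H')) (hcard : M.card ≤ x none) :
    M.card ≤ tetrisFun (nimMove (apexCone 𝓗)) x := by
  induction M using Finset.induction_on generalizing x with
  | empty => simp
  | @insert H M hHM ih =>
    rw [Finset.coe_insert, Set.insert_subset_iff] at hMx
    rw [Finset.coe_insert, Set.pairwise_insert_of_symm] at hM
    rw [Finset.card_insert_of_notMem hHM] at hcard ⊢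
    obtain ⟨y, hxy, hy, hlive⟩ := exists_nimMove_apexCone_of_mem_liveEdges hMx.1 (by omega)
    have hMy : M.card ≤ tetrisFun (nimMove (apexCone 𝓗)) y :=
      ih (fun H' hH' => hlive H' (hMx.2 hH') (hM.2 H' hH' (ne_of_mem_of_not_mem hH' hHM).symm))
        hM.1 (by omega)
    have := tetrisFun_add_one_le_of_move (fun x => x none)
      (fun _ _ => apex_lt_of_nimMove_apexCone) hxy
    omega

end ApexCone

theorem stmt18_general {V : Type*} [DecidableEq V]
    (𝓗 : Finset (Finset V)) (hne : ∀ H ∈ 𝓗, H.Nonempty) :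
    (∀ E ∈ {E : Finset (Option V) | ∃ H ∈ 𝓗, E = insert none (H.image some)},
     ∀ E' ∈ {E : Finset (Option V) | ∃ H ∈ 𝓗, E = insert none (H.image some)},
      (E ∩ E').Nonempty) ∧
    tetrisFun
      (nimMove {E : Finset (Option V) | ∃ H ∈ 𝓗, E = insert none (H.image some)})
      (fun i => Option.elim i 𝓗.card (fun _ => 1))
      = matchingNumber (↑𝓗 : Set (Finset V)) := by
  set x : Option V → ℕ := fun i => Option.elim i 𝓗.card (fun _ => 1)
  have hlive : liveEdges ↑𝓗 x = ↑𝓗 := by ext H; simp [liveEdges, x]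
  refine ⟨apexCone_intersecting (𝓗 : Set (Finset V)), le_antisymm ?_ ?_⟩
  · have := tetrisFun_apexCone_le_matchingNumber 𝓗.finite_toSet hne (x := x) fun _ => le_rfl
    rwa [hlive] at this
  · obtain ⟨M, hM𝓗, hM, hcard⟩ := exists_card_eq_matchingNumber 𝓗.finite_toSet
    rw [← hcard]
    refine card_le_tetrisFun_apexCone M (hM𝓗.trans hlive.ge) hM ?_
    simpa [hcard, x] using matchingNumber_le_ncard 𝓗.finite_toSet

theorem stmt18 {V : Type*} [Fintype V] [DecidableEq V]
    (𝓗 : Finset (Finset V)) (hne : ∀ H ∈ 𝓗, H.Nonempty) :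
    (∀ E ∈ {E : Finset (Option V) | ∃ H ∈ 𝓗, E = insert none (H.image some)},
     ∀ E' ∈ {E : Finset (Option V) | ∃ H ∈ 𝓗, E = insert none (H.image some)},
      (E ∩ E').Nonempty) ∧
    tetrisFun
      (nimMove {E : Finset (Option V) | ∃ H ∈ 𝓗, E = insert none (H.image some)})
      (fun i => Option.elim i 𝓗.card (fun _ => 1))
      = matchingNumber (↑𝓗 : Set (Finset V)) :=
  stmt18_general 𝓗 hne
end
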